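/- Let G be any n-lift of a d-regular graph H on vertex set [h]. Then λ*(G) ≤ 96 · sup_{x∈Z} |⟨x,x⟩_{N,E*}| + 480√d. -/

import Mathlib

open scoped BigOperators
open scoped Classical

namespace RandomLifts

noncomputable section

/-- Probability of an event under the uniform measure on a finite type. -/
def unifProb {Ω : Type*} [Fintype Ω] (p : Ω → Prop) : ℝ :=
  letI := Classical.decPred p
  ((Finset.univ.filter p).card : ℝ) / (Fintype.card Ω : ℝ)

/-- The sample space of a random `n`-lift of a graph on `Fin h`: an
independent, uniformly random permutation for each (ordered) pair of fibres
(only the permutations attached to pairs `i < i'` with `i ~ i'` are used). -/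
abbrev LiftSpace (h n : ℕ) := Fin h → Fin h → Equiv.Perm (Fin n)

/-- The `n`-lift of `H` determined by the matchings `ω`. -/
def liftGraph {h n : ℕ} (H : SimpleGraph (Fin h)) (ω : LiftSpace h n) :
    SimpleGraph (Fin h × Fin n) where
  Adj u v := H.Adj u.1 v.1 ∧
    ((u.1 < v.1 ∧ v.2 = ω u.1 v.1 u.2) ∨ (v.1 < u.1 ∧ u.2 = ω v.1 u.1 v.2))
  symm := by
    constructor
    intro u v huv
    exact ⟨huv.1.symm, huv.2.symm⟩
  loopless := by
    constructor
    intro u hu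
    exact H.irrefl hu.1

/-- The adjacency matrix of a graph, with real entries. -/
def adjMat {V : Type*} (G : SimpleGraph V) : Matrix V V ℝ :=
  fun u v => if G.Adj u v then 1 else 0

/-- The largest eigenvalue of (the adjacency matrix of) a graph on a finite
vertex set. -/
def lambdaMax {V : Type*} [Fintype V] (G : SimpleGraph V) : ℝ :=
  sSup {μ : ℝ | ∃ x : V → ℝ, x ≠ 0 ∧ (adjMat G).mulVec x = μ • x}

/-- `λ*(G)`: the largest absolute value of a *new* eigenvalue of a lift,
i.e. of an eigenvalue admitting an eigenvector balanced on every fibre. -/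
def lambdaStar {h n : ℕ} (G : SimpleGraph (Fin h × Fin n)) : ℝ :=
  sSup {r : ℝ | ∃ (μ : ℝ) (x : Fin h × Fin n → ℝ), x ≠ 0 ∧
    (adjMat G).mulVec x = μ • x ∧ (∀ i : Fin h, ∑ j : Fin n, x (i, j) = 0) ∧ r = |μ|}

/-- The matrix `M̄` of edge probabilities. -/
def Mbar (h n : ℕ) (H : SimpleGraph (Fin h)) :
    Matrix (Fin h × Fin n) (Fin h × Fin n) ℝ :=
  fun u v => if H.Adj u.1 v.1 then 1 / (n : ℝ) else 0

/-- `N = M − M̄`. -/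
def Nmat {h n : ℕ} (H : SimpleGraph (Fin h)) (G : SimpleGraph (Fin h × Fin n)) :
    Matrix (Fin h × Fin n) (Fin h × Fin n) ℝ :=
  adjMat G - Mbar h n H

/-- `⟨x,x⟩_A`. -/
def quadForm {V : Type*} [Fintype V] (A : Matrix V V ℝ) (x : V → ℝ) : ℝ :=
  ∑ u, ∑ v, x u * A u v * x v

/-- `⟨x,x⟩_{A,E}`: the quadratic form restricted to pairs of entries lying in
`E ⊆ ℝ²`. -/
def quadFormOn {V : Type*} [Fintype V] (A : Matrix V V ℝ) (E : Set (ℝ × ℝ))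
    (x : V → ℝ) : ℝ :=
  ∑ u, ∑ v, if (x u, x v) ∈ E then x u * A u v * x v else 0

/-- The set `E* = {(x₁,x₂) : x₁,x₂ > 0, d^{-1/2} < x₁/x₂ < d^{1/2}}`. -/
def Estar (d : ℕ) : Set (ℝ × ℝ) :=
  {p | 0 < p.1 ∧ 0 < p.2 ∧ (Real.sqrt d)⁻¹ < p.1 / p.2 ∧ p.1 / p.2 < Real.sqrt d}

/-- `D^{>0} = {2^i/√(nh) : i ≥ 1}`. -/
def Dpos (n h : ℕ) : Set ℝ := {w | ∃ i : ℕ, 1 ≤ i ∧ w = 2 ^ i / Real.sqrt (n * h)}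

/-- `D⁺ = {0} ∪ D^{>0}`. -/
def Dplus (n h : ℕ) : Set ℝ := insert 0 (Dpos n h)

/-- Membership in the set `Z` of dyadic test vectors. -/
def memZ (d h n : ℕ) (x : Fin h × Fin n → ℝ) : Prop :=
  (∑ v, x v ^ 2) ≤ 10 ∧ (∀ v, x v ∈ Dplus n h) ∧
    ∀ u v, x v ≠ 0 → x u ≤ (d : ℝ) * x v

/-- A `Z`-type. -/
def IsZType (d h n : ℕ) (a : Fin h → ℝ → ℕ) : Prop :=
  (∀ i w, a i w ≠ 0 → w ∈ Dplus n h) ∧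
  (∀ i, (∑ᶠ w : ℝ, a i w) ≤ n) ∧
  (∃ w₀ ∈ Dpos n h, ∀ i w, a i w ≠ 0 → w₀ ≤ w ∧ w ≤ w₀ * d) ∧
  ((∑ i : Fin h, ∑ᶠ w : ℝ, w ^ 2 * (a i w : ℝ)) ≤ 10)

/-- A pattern `(a,e)`. -/
def IsPattern (d h n : ℕ) (H : SimpleGraph (Fin h)) (a : Fin h → ℝ → ℕ)
    (e : Fin h → ℝ → Fin h → ℝ → ℕ) : Prop :=
  IsZType d h n a ∧
  (∀ i w i' w', e i w i' w' = e i' w' i w) ∧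
  (∀ i w i' w', e i w i' w' ≤ min (a i w) (a i' w')) ∧
  (∀ i w i' w', ¬H.Adj i i' → e i w i' w' = 0)

/-- The adjacency relation of the graph `Γ`. -/
def gammaAdj (d h n : ℕ) (H : SimpleGraph (Fin h)) (p q : Fin h × ℝ) : Prop :=
  H.Adj p.1 q.1 ∧ p.2 ∈ Dpos n h ∧ q.2 ∈ Dpos n h ∧
    (Real.sqrt d)⁻¹ < p.2 / q.2 ∧ p.2 / q.2 < Real.sqrt d

/-- The summand `w w' (e_{i,w,i',w'} − a_{i,w}a_{i',w'}/n)` appearing in the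
potency, for an ordered pair of `Γ`-adjacent vertices. -/
def potTerm (d h n : ℕ) (H : SimpleGraph (Fin h)) (a : Fin h → ℝ → ℕ)
    (e : Fin h → ℝ → Fin h → ℝ → ℕ) (p q : Fin h × ℝ) : ℝ :=
  if gammaAdj d h n H p q then
    p.2 * q.2 * ((e p.1 p.2 q.1 q.2 : ℝ) - (a p.1 p.2 : ℝ) * (a q.1 q.2 : ℝ) / n)
  else 0

/-- The potency `p(a,e)` of a pattern: the sum over unordered edges of `Γ`,
realised as half of the sum over ordered pairs. -/
def potency (d h n : ℕ) (H : SimpleGraph (Fin h)) (a : Fin h → ℝ → ℕ)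
    (e : Fin h → ℝ → Fin h → ℝ → ℕ) : ℝ :=
  |(1 / 2 : ℝ) * ∑ i : Fin h, ∑ i' : Fin h, ∑ᶠ w : ℝ, ∑ᶠ w' : ℝ,
      potTerm d h n H a e (i, w) (i', w')|

/-- The maximal potency `p̃(a,e)` over subsets of the edges of `Γ`. -/
def potencyTilde (d h n : ℕ) (H : SimpleGraph (Fin h)) (a : Fin h → ℝ → ℕ)
    (e : Fin h → ℝ → Fin h → ℝ → ℕ) : ℝ :=
  sSup {r : ℝ | ∃ E : Set ((Fin h × ℝ) × (Fin h × ℝ)),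
    (∀ pq ∈ E, gammaAdj d h n H pq.1 pq.2) ∧
    (∀ p q, (p, q) ∈ E → (q, p) ∈ E) ∧
    r = |(1 / 2 : ℝ) * ∑ i : Fin h, ∑ i' : Fin h, ∑ᶠ w : ℝ, ∑ᶠ w' : ℝ,
        (if ((i, w), (i', w')) ∈ E then potTerm d h n H a e (i, w) (i', w') else 0)|}

/-- The type of the sub-pattern `(a,e)_S`, first component. -/
def restrictA {h : ℕ} (S : Set (Fin h × ℝ)) (a : Fin h → ℝ → ℕ) :
    Fin h → ℝ → ℕ :=
  fun i w => if (i, w) ∈ S then a i w else 0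

/-- The edge counts of the sub-pattern `(a,e)_S`, second component. -/
def restrictE {h : ℕ} (S : Set (Fin h × ℝ)) (e : Fin h → ℝ → Fin h → ℝ → ℕ) :
    Fin h → ℝ → Fin h → ℝ → ℕ :=
  fun i w i' w' => if (i, w) ∈ S ∧ (i', w') ∈ S then e i w i' w' else 0

/-- `A_{i,w}(y) = {v ∈ V_i : y_v = w}`. -/
def Aset {h n : ℕ} (y : Fin h × Fin n → ℝ) (i : Fin h) (w : ℝ) :
    Finset (Fin h × Fin n) :=
  letI := Classical.decPred fun v : Fin h × Fin n => v.1 = i ∧ y v = w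
  Finset.univ.filter fun v => v.1 = i ∧ y v = w

/-- The number of edges of `G` between the sets `A` and `B`. -/
def edgeCount {h n : ℕ} (G : SimpleGraph (Fin h × Fin n))
    (A B : Finset (Fin h × Fin n)) : ℕ :=
  letI := Classical.decPred fun pq : (Fin h × Fin n) × (Fin h × Fin n) => G.Adj pq.1 pq.2
  ((A ×ˢ B).filter fun pq => G.Adj pq.1 pq.2).card

/-- The pattern `(a,e)` can be found in `G` (with some witness `y ∈ Z`). -/
def canFind (d h n : ℕ) (H : SimpleGraph (Fin h)) (G : SimpleGraph (Fin h × Fin n))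
    (a : Fin h → ℝ → ℕ) (e : Fin h → ℝ → Fin h → ℝ → ℕ) : Prop :=
  ∃ y : Fin h × Fin n → ℝ, memZ d h n y ∧
    (∀ i : Fin h, ∀ w ∈ Dpos n h, a i w = (Aset y i w).card) ∧
    (∀ i w i' w', H.Adj i i' → w ∈ Dpos n h → w' ∈ Dpos n h →
      e i w i' w' = edgeCount G (Aset y i w) (Aset y i' w'))

/-- The normalised deviation `ε_{i,w,i',w'}` of a pattern. -/
def epsP {h : ℕ} (n : ℕ) (a : Fin h → ℝ → ℕ) (e : Fin h → ℝ → Fin h → ℝ → ℕ)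
    (p q : Fin h × ℝ) : ℝ :=
  if a p.1 p.2 = 0 ∨ a q.1 q.2 = 0 then 1
  else (e p.1 p.2 q.1 q.2 : ℝ) / ((a p.1 p.2 : ℝ) * (a q.1 q.2 : ℝ) / n) - 1

/-- `b(ε) = (1+ε)log(1+ε) − ε` (with `b(−1)=1`, automatic as `log 0 = 0`). -/
def bFun (x : ℝ) : ℝ := (1 + x) * Real.log (1 + x) - x

/-- The adjacency relation of the large-deviations graph `Γ_LD`. -/
def gammaLDAdj (d h n : ℕ) (H : SimpleGraph (Fin h)) (a : Fin h → ℝ → ℕ)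
    (e : Fin h → ℝ → Fin h → ℝ → ℕ) (p q : Fin h × ℝ) : Prop :=
  gammaAdj d h n H p q ∧ Real.exp 2 - 1 < epsP n a e p q

/-- The adjacency relation of the small-deviations graph `Γ_SD`. -/
def gammaSDAdj (d h n : ℕ) (H : SimpleGraph (Fin h)) (a : Fin h → ℝ → ℕ)
    (e : Fin h → ℝ → Fin h → ℝ → ℕ) (p q : Fin h × ℝ) : Prop :=
  gammaAdj d h n H p q ∧ epsP n a e p q ≤ Real.exp 2 - 1

/-- The summand `w w' (a_{i,w}a_{i',w'}/n) ε_{i,w,i',w'}` over `Γ_LD`. -/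
def potTermLD (d h n : ℕ) (H : SimpleGraph (Fin h)) (a : Fin h → ℝ → ℕ)
    (e : Fin h → ℝ → Fin h → ℝ → ℕ) (p q : Fin h × ℝ) : ℝ :=
  if gammaLDAdj d h n H a e p q then
    p.2 * q.2 * ((a p.1 p.2 : ℝ) * (a q.1 q.2 : ℝ) / n) * epsP n a e p q
  else 0

/-- The summand `w w' (a_{i,w}a_{i',w'}/n) ε_{i,w,i',w'}` over `Γ_SD`. -/
def potTermSD (d h n : ℕ) (H : SimpleGraph (Fin h)) (a : Fin h → ℝ → ℕ)
    (e : Fin h → ℝ → Fin h → ℝ → ℕ) (p q : Fin h × ℝ) : ℝ :=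
  if gammaSDAdj d h n H a e p q then
    p.2 * q.2 * ((a p.1 p.2 : ℝ) * (a q.1 q.2 : ℝ) / n) * epsP n a e p q
  else 0

/-- The large-deviations potency `p_LD(a,e)`. -/
def pLD (d h n : ℕ) (H : SimpleGraph (Fin h)) (a : Fin h → ℝ → ℕ)
    (e : Fin h → ℝ → Fin h → ℝ → ℕ) : ℝ :=
  |(1 / 2 : ℝ) * ∑ i : Fin h, ∑ i' : Fin h, ∑ᶠ w : ℝ, ∑ᶠ w' : ℝ,
      potTermLD d h n H a e (i, w) (i', w')|

/-- The small-deviations potency `p_SD(a,e)`. -/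
def pSD (d h n : ℕ) (H : SimpleGraph (Fin h)) (a : Fin h → ℝ → ℕ)
    (e : Fin h → ℝ → Fin h → ℝ → ℕ) : ℝ :=
  |(1 / 2 : ℝ) * ∑ i : Fin h, ∑ i' : Fin h, ∑ᶠ w : ℝ, ∑ᶠ w' : ℝ,
      potTermSD d h n H a e (i, w) (i', w')|

/-- The local large-deviations potency `p_LD((a,e);(i,w))`. -/
def pLDlocal (d h n : ℕ) (H : SimpleGraph (Fin h)) (a : Fin h → ℝ → ℕ)
    (e : Fin h → ℝ → Fin h → ℝ → ℕ) (p : Fin h × ℝ) : ℝ :=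
  |∑ i' : Fin h, ∑ᶠ w' : ℝ, potTermLD d h n H a e p (i', w')|

/-- The weighted neighbourhood mass `N̂_{i,w}(a,e)`. -/
def Nhat (d h n : ℕ) (H : SimpleGraph (Fin h)) (a : Fin h → ℝ → ℕ)
    (p : Fin h × ℝ) : ℝ :=
  ∑ i' : Fin h, ∑ᶠ w' : ℝ,
    (if gammaAdj d h n H p (i', w') then
      w' ^ 2 * (a i' w' : ℝ) * (w' / (p.2 * Real.sqrt d)) else 0)

/-- Condition (LD1) for a set `U ⊆ V(Γ)`. -/
def condLD1 (d h n : ℕ) (H : SimpleGraph (Fin h)) (L : ℝ) (a : Fin h → ℝ → ℕ)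
    (e : Fin h → ℝ → Fin h → ℝ → ℕ) (U : Set (Fin h × ℝ)) : Prop :=
  ∀ p ∈ U, L * (a p.1 p.2 : ℝ) * p.2 ^ 2 * Real.sqrt d ≤
    pLDlocal d h n H (restrictA U a) (restrictE U e) p

/-- Condition (LD2) for a set `U ⊆ V(Γ)`. -/
def condLD2 (d h n : ℕ) (H : SimpleGraph (Fin h)) (L : ℝ) (a : Fin h → ℝ → ℕ)
    (e : Fin h → ℝ → Fin h → ℝ → ℕ) (U : Set (Fin h × ℝ)) : Prop :=
  ∀ p ∈ U, L * Nhat d h n H a p / Real.sqrt d ≤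
    pLDlocal d h n H (restrictA U a) (restrictE U e) p

/-- `Π_{(i,w)∈S, a_{i,w}≥1} a_{i,w}^{d/4}`. -/
def prodA {h : ℕ} (d : ℕ) (S : Set (Fin h × ℝ)) (a : Fin h → ℝ → ℕ) : ℝ :=
  ∏ᶠ (p : Fin h × ℝ) (_ : p ∈ S ∧ 1 ≤ a p.1 p.2),
    ((a p.1 p.2 : ℝ) ^ ((d : ℝ) / 4))

/-- `Π_{(i,w)∈S, a_{i,w}≥1} C(n, min(a_{i,w}, ⌊n/2⌋))`. -/
def prodChoose {h : ℕ} (n : ℕ) (S : Set (Fin h × ℝ)) (a : Fin h → ℝ → ℕ) : ℝ :=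
  ∏ᶠ (p : Fin h × ℝ) (_ : p ∈ S ∧ 1 ≤ a p.1 p.2),
    ((n.choose (min (a p.1 p.2) (n / 2)) : ℝ))

/-- The number of matching edges between `A` and `B` under the bijection `M`. -/
def matchCount {n : ℕ} (M : Equiv.Perm (Fin n)) (A B : Finset (Fin n)) : ℕ :=
  (A.filter fun v => M v ∈ B).card

end

end RandomLifts

/-!
A new eigenvalue `μ` with balanced unit eigenvector `x` equals `⟨x, x⟩_N`, because `M̄ x = 0`.
Splitting `x = x⁺ - x⁻`, the parallelogram identity reduces the claim to nonnegative unit vectors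
`w`. As `N` has zero diagonal, `⟨·, ·⟩_N` is affine in each coordinate, so on a dyadic box around
`w` it is extremal at vertices: vectors `y` with entries in `D⁺` and `‖y‖² ≤ 8`. Pairs of entries
of `y` outside `E*` have ratio at least `√d` and contribute at most `4 √d ‖y‖²`, since `|N|` has
row sums at most `2 d`. Entries `2 ^ i / √(n h)` forming a pair in `E*` have exponents within `m`
of each other, where `4 ^ m ≈ d`; cutting the exponents into levels of length `m`, the restriction
of `y` to two consecutive levels has ratios at most `d`, and rescaled by a power of two it lies in
`Z`.
-/

namespace RandomLifts

open Finset Matrix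

section QuadraticForm

variable {V : Type*} [Fintype V]

theorem quadForm_eq_dotProduct (A : Matrix V V ℝ) (x : V → ℝ) :
    quadForm A x = x ⬝ᵥ (A *ᵥ x) := by
  simp only [quadForm, dotProduct, mulVec, mul_sum, mul_assoc]

theorem quadForm_sub_left (A B : Matrix V V ℝ) (x : V → ℝ) :
    quadForm (A - B) x = quadForm A x - quadForm B x := by
  simp only [quadForm_eq_dotProduct, sub_mulVec, dotProduct_sub]

theorem quadForm_neg_left (A : Matrix V V ℝ) (x : V → ℝ) :
    quadForm (-A) x = -quadForm A x := by
  simp only [quadForm_eq_dotProduct, neg_mulVec, dotProduct_neg]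

theorem quadForm_smul (A : Matrix V V ℝ) (c : ℝ) (x : V → ℝ) :
    quadForm A (c • x) = c ^ 2 * quadForm A x := by
  simp only [quadForm_eq_dotProduct, mulVec_smul, dotProduct_smul, smul_dotProduct, smul_eq_mul]
  ring

theorem quadForm_sub_add_quadForm_add (A : Matrix V V ℝ) (u v : V → ℝ) :
    quadForm A (u - v) + quadForm A (u + v) = 2 * quadForm A u + 2 * quadForm A v := by
  simp only [quadForm_eq_dotProduct, mulVec_sub, mulVec_add, dotProduct_sub, dotProduct_add,
    sub_dotProduct, add_dotProduct]
  ring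

theorem exists_quadForm_update_eq_add_mul (A : Matrix V V ℝ) (hA : ∀ a, A a a = 0) (y : V → ℝ)
    (c : V) : ∃ α β : ℝ, ∀ t, quadForm A (Function.update y c t) = α + β * t := by
  set w := Function.update y c 0
  refine ⟨quadForm A w, (A *ᵥ w) c + (w ᵥ* A) c, fun t => ?_⟩
  have hsplit : Function.update y c t = w + Pi.single c t := by
    ext a
    by_cases ha : a = c <;> simp [w, ha]
  rw [hsplit]
  have hss : Pi.single c t ⬝ᵥ A *ᵥ Pi.single c t = 0 := by
    simp [single_dotProduct, hA]
  rw [quadForm_eq_dotProduct, quadForm_eq_dotProduct, mulVec_add, dotProduct_add, add_dotProduct,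
    add_dotProduct, hss, single_dotProduct, dotProduct_mulVec w A (Pi.single c t),
    dotProduct_single]
  ring

theorem exists_vertex_le_of_affine_update (f : (V → ℝ) → ℝ)
    (hf : ∀ y c, ∃ α β : ℝ, ∀ t, f (Function.update y c t) = α + β * t)
    {lo hi z : V → ℝ} (hlo : lo ≤ z) (hhi : z ≤ hi) :
    ∃ y, (∀ a, y a = lo a ∨ y a = hi a) ∧ f z ≤ f y := by
  suffices H : ∀ s : Finset V, ∃ y, (∀ a ∈ s, y a = lo a ∨ y a = hi a) ∧
      (∀ a ∉ s, y a = z a) ∧ f z ≤ f y by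
    obtain ⟨y, hy, -, hfy⟩ := H univ
    exact ⟨y, fun a => hy a (mem_univ a), hfy⟩
  intro s
  induction s using Finset.induction_on with
  | empty => exact ⟨z, by simp, fun _ _ => rfl, le_rfl⟩
  | @insert c s hcs ih =>
    obtain ⟨y, hys, hyz, hfy⟩ := ih
    obtain ⟨α, β, hαβ⟩ := hf y c
    set t := if 0 ≤ β then hi c else lo c
    have hyc : β * y c ≤ β * t := by
      rw [hyz c hcs]
      by_cases hβ : 0 ≤ β
      · simpa [t, hβ] using mul_le_mul_of_nonneg_left (hhi c) hβ
      · simpa [t, hβ] using mul_le_mul_of_nonpos_left (hlo c) (not_le.mp hβ).le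
    refine ⟨Function.update y c t, fun a ha => ?_, fun a ha => ?_, ?_⟩
    · rcases mem_insert.mp ha with rfl | ha
      · by_cases hβ : 0 ≤ β <;> simp [t, hβ]
      · rw [Function.update_of_ne (ne_of_mem_of_not_mem ha hcs)]
        exact hys a ha
    · rw [Function.update_of_ne (ne_of_mem_of_not_mem (mem_insert_self c s) ha).symm]
      exact hyz a (fun h => ha (mem_insert_of_mem h))
    · calc f z ≤ f y := hfy
        _ = α + β * y c := by rw [← hαβ, Function.update_eq_self]
        _ ≤ α + β * t := by linarith
        _ = f (Function.update y c t) := (hαβ t).symm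

theorem quadForm_sub_quadFormOn (A : Matrix V V ℝ) (E : Set (ℝ × ℝ)) (x : V → ℝ) :
    quadForm A x - quadFormOn A E x = quadFormOn A Eᶜ x := by
  simp only [quadForm, quadFormOn, ← sum_sub_distrib, Set.mem_compl_iff]
  refine sum_congr rfl fun a _ => sum_congr rfl fun b _ => ?_
  split_ifs <;> ring

theorem quadFormOn_smul (A : Matrix V V ℝ) {E : Set (ℝ × ℝ)} {c : ℝ}
    (hE : ∀ p q, (c * p, c * q) ∈ E ↔ (p, q) ∈ E) (x : V → ℝ) :
    quadFormOn A E (c • x) = c ^ 2 * quadFormOn A E x := by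
  simp only [quadFormOn, mul_sum, Pi.smul_apply, smul_eq_mul, hE]
  refine sum_congr rfl fun a _ => sum_congr rfl fun b _ => ?_
  split_ifs <;> ring

theorem quadFormOn_indicator (A : Matrix V V ℝ) (E : Set (ℝ × ℝ)) (T : Set V) (y : V → ℝ) :
    quadFormOn A E (T.indicator y) = ∑ a, ∑ b,
      if a ∈ T ∧ b ∈ T then (if (y a, y b) ∈ E then y a * A a b * y b else 0) else 0 := by
  simp only [quadFormOn]
  refine sum_congr rfl fun a _ => sum_congr rfl fun b _ => ?_
  by_cases ha : a ∈ T <;> by_cases hb : b ∈ T <;> simp [ha, hb]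

theorem sum_abs_mul_sq_add_sq_le {A : Matrix V V ℝ} {D : ℝ} (hrow : ∀ a, ∑ b, |A a b| ≤ D)
    (hcol : ∀ b, ∑ a, |A a b| ≤ D) (x : V → ℝ) :
    ∑ a, ∑ b, |A a b| * (x a ^ 2 + x b ^ 2) ≤ 2 * D * ∑ a, x a ^ 2 := by
  have hleft : ∑ a, ∑ b, |A a b| * x a ^ 2 ≤ D * ∑ a, x a ^ 2 := by
    rw [mul_sum]
    exact sum_le_sum fun a _ => by
      rw [← sum_mul]; exact mul_le_mul_of_nonneg_right (hrow a) (sq_nonneg _)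
  have hright : ∑ a, ∑ b, |A a b| * x b ^ 2 ≤ D * ∑ a, x a ^ 2 := by
    rw [sum_comm, mul_sum]
    exact sum_le_sum fun b _ => by
      rw [← sum_mul]; exact mul_le_mul_of_nonneg_right (hcol b) (sq_nonneg _)
  simp only [mul_add, sum_add_distrib]
  linarith

theorem mul_abs_quadFormOn_le {A : Matrix V V ℝ} {D : ℝ} (hrow : ∀ a, ∑ b, |A a b| ≤ D)
    (hcol : ∀ b, ∑ a, |A a b| ≤ D) {E : Set (ℝ × ℝ)} {x : V → ℝ} {c : ℝ} (hc : 0 ≤ c)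
    (hE : ∀ a b, (x a, x b) ∈ E → c * |x a * x b| ≤ x a ^ 2 + x b ^ 2) :
    c * |quadFormOn A E x| ≤ 2 * D * ∑ a, x a ^ 2 := by
  refine le_trans ?_ (sum_abs_mul_sq_add_sq_le hrow hcol x)
  refine (mul_le_mul_of_nonneg_left (abs_sum_le_sum_abs _ _) hc).trans ?_
  rw [mul_sum]
  refine sum_le_sum fun a _ => (mul_le_mul_of_nonneg_left (abs_sum_le_sum_abs _ _) hc).trans ?_
  rw [mul_sum]
  refine sum_le_sum fun b _ => ?_
  split_ifs with hab
  · calc c * |x a * A a b * x b| = |A a b| * (c * |x a * x b|) := by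
          rw [abs_mul, abs_mul, abs_mul]; ring
      _ ≤ |A a b| * (x a ^ 2 + x b ^ 2) := mul_le_mul_of_nonneg_left (hE a b hab) (abs_nonneg _)
  · simp only [abs_zero, mul_zero]
    positivity

theorem abs_quadFormOn_le {A : Matrix V V ℝ} {D : ℝ} (hrow : ∀ a, ∑ b, |A a b| ≤ D)
    (hcol : ∀ b, ∑ a, |A a b| ≤ D) (E : Set (ℝ × ℝ)) (x : V → ℝ) :
    |quadFormOn A E x| ≤ D * ∑ a, x a ^ 2 := by
  have := mul_abs_quadFormOn_le hrow hcol (E := E) (x := x) zero_le_two fun a b _ => by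
    simpa [abs_mul, sq_abs, mul_assoc] using two_mul_le_add_sq |x a| |x b|
  linarith

-- An `E`-pair `(a, b)` is counted in the window `{k, k + 1}` of levels for `k = min (K a) (K b)`
-- only, once the overlaps `{k + 1}` of consecutive windows are removed.
theorem quadFormOn_eq_sum_levels (A : Matrix V V ℝ) (E : Set (ℝ × ℝ)) (y : V → ℝ) (K : V → ℕ)
    (hK : ∀ a b, (y a, y b) ∈ E → K a ≤ K b + 1 ∧ K b ≤ K a + 1) :
    quadFormOn A E y = ∑ k ∈ range (univ.sup K + 1),
      (quadFormOn A E ({a | K a = k ∨ K a = k + 1}.indicator y)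
        - quadFormOn A E ({a | K a = k + 1}.indicator y)) := by
  simp only [quadFormOn_indicator, ← sum_sub_distrib]
  rw [sum_comm]
  refine sum_congr rfl fun a _ => ?_
  rw [sum_comm]
  refine sum_congr rfl fun b _ => ?_
  split_ifs with hE
  · obtain ⟨hab, hba⟩ := hK a b hE
    have hmin : min (K a) (K b) ∈ range (univ.sup K + 1) :=
      mem_range.mpr (Nat.lt_succ_of_le ((min_le_left _ _).trans (le_sup (mem_univ a))))
    trans ∑ k ∈ range (univ.sup K + 1), if min (K a) (K b) = k then y a * A a b * y b else 0
    · rw [sum_ite_eq, if_pos hmin]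
    · refine sum_congr rfl fun k _ => ?_
      simp only [Set.mem_ofPred_eq]
      split_ifs <;> first | omega | simp
  · simp

theorem abs_quadFormOn_le_of_levels (A : Matrix V V ℝ) (E : Set (ℝ × ℝ)) (y : V → ℝ)
    (K : V → ℕ) {C : ℝ} (hC0 : 0 ≤ C)
    (hK : ∀ a b, (y a, y b) ∈ E → K a ≤ K b + 1 ∧ K b ≤ K a + 1)
    (hC : ∀ k (T : Set V), T ⊆ {a | K a = k ∨ K a = k + 1} →
      |quadFormOn A E (T.indicator y)| ≤ C * ∑ a, T.indicator y a ^ 2) :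
    |quadFormOn A E y| ≤ 3 * C * ∑ a, y a ^ 2 := by
  set β : ℕ → ℝ := fun k => ∑ a, {a | K a = k}.indicator y a ^ 2
  have hβ : ∀ S : Finset ℕ, ∑ k ∈ S, β k ≤ ∑ a, y a ^ 2 := by
    intro S
    rw [sum_comm]
    refine sum_le_sum fun a _ => ?_
    simp only [Set.indicator_apply, Set.mem_ofPred_eq, apply_ite (· ^ 2), ne_eq,
      OfNat.ofNat_ne_zero, not_false_eq_true, zero_pow, sum_ite_eq]
    split_ifs
    · exact le_rfl
    · positivity
  have hwindow : ∀ k, ∑ a, {a | K a = k ∨ K a = k + 1}.indicator y a ^ 2 = β k + β (k + 1) := by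
    intro k
    simp only [β, ← sum_add_distrib]
    refine sum_congr rfl fun a _ => ?_
    simp only [Set.indicator_apply, Set.mem_ofPred_eq]
    split_ifs <;> first | omega | simp
  set R := univ.sup K + 1
  have hshift : ∑ k ∈ range (R + 1), β k = ∑ k ∈ range R, β (k + 1) + β 0 :=
    sum_range_succ' β R
  have hβ0 : 0 ≤ β 0 := by positivity
  rw [quadFormOn_eq_sum_levels A E y K hK]
  refine (abs_sum_le_sum_abs _ _).trans ?_
  calc ∑ k ∈ range R, |quadFormOn A E ({a | K a = k ∨ K a = k + 1}.indicator y)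
          - quadFormOn A E ({a | K a = k + 1}.indicator y)|
      ≤ ∑ k ∈ range R, (C * (β k + β (k + 1)) + C * β (k + 1)) := by
        refine sum_le_sum fun k _ => (abs_sub _ _).trans (add_le_add ?_ ?_)
        · rw [← hwindow]; exact hC k _ le_rfl
        · exact hC k _ fun a ha => Or.inr ha
    _ = C * ∑ k ∈ range R, β k + 2 * C * ∑ k ∈ range R, β (k + 1) := by
        rw [mul_sum, mul_sum, ← sum_add_distrib]
        exact sum_congr rfl fun k _ => by ring
    _ ≤ 3 * C * ∑ a, y a ^ 2 := by
        have h1 := hβ (range R)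
        have h2 := hβ (range (R + 1))
        nlinarith

theorem abs_quadForm_le_five_mul (A : Matrix V V ℝ) {C : ℝ}
    (hC : ∀ w : V → ℝ, 0 ≤ w → ∑ a, w a ^ 2 ≤ 1 → |quadForm A w| ≤ C) {z : V → ℝ}
    (hz : ∑ a, z a ^ 2 ≤ 1) : |quadForm A z| ≤ 5 * C := by
  have hsmall : ∀ w : V → ℝ, 0 ≤ w → w ≤ |z| → ∑ a, w a ^ 2 ≤ 1 := fun w hw0 hwz =>
    le_trans (sum_le_sum fun a _ => by
      simpa [sq_abs] using pow_le_pow_left₀ (hw0 a) (hwz a) 2) hz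
  have hpos := hC _ (posPart_nonneg z) (hsmall _ (posPart_nonneg z)
    (posPart_add_negPart z ▸ le_add_of_nonneg_right (negPart_nonneg z)))
  have hneg := hC _ (negPart_nonneg z) (hsmall _ (negPart_nonneg z)
    (posPart_add_negPart z ▸ le_add_of_nonneg_left (posPart_nonneg z)))
  have habs := hC _ (abs_nonneg z) (hsmall _ (abs_nonneg z) le_rfl)
  have key := quadForm_sub_add_quadForm_add A z⁺ z⁻
  rw [posPart_sub_negPart, posPart_add_negPart] at key
  rw [abs_le] at hpos hneg habs ⊢
  constructor <;> linarith

theorem exists_sum_sq_eq_one_quadForm_eq {A : Matrix V V ℝ} {x : V → ℝ} (hx : x ≠ 0) {μ : ℝ}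
    (hμ : quadForm A x = μ * ∑ a, x a ^ 2) : ∃ z : V → ℝ, ∑ a, z a ^ 2 = 1 ∧ quadForm A z = μ := by
  obtain ⟨a, ha⟩ := Function.ne_iff.mp hx
  have hpos : 0 < ∑ a, x a ^ 2 :=
    sum_pos' (fun b _ => sq_nonneg (x b)) ⟨a, mem_univ a, pow_two_pos_of_ne_zero ha⟩
  have hc : ((√(∑ a, x a ^ 2))⁻¹) ^ 2 * ∑ a, x a ^ 2 = 1 := by
    rw [inv_pow, Real.sq_sqrt hpos.le, inv_mul_cancel₀ hpos.ne']
  refine ⟨(√(∑ a, x a ^ 2))⁻¹ • x, ?_, ?_⟩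
  · simpa [mul_pow, ← mul_sum] using hc
  · rw [quadForm_smul, hμ, mul_left_comm, hc, mul_one]

end QuadraticForm

section Dyadic

theorem Estar_mul_iff (d : ℕ) {c : ℝ} (hc : 0 < c) (p q : ℝ) :
    (c * p, c * q) ∈ Estar d ↔ (p, q) ∈ Estar d := by
  simp only [Estar, Set.mem_ofPred_eq, mul_div_mul_left _ _ hc.ne', mul_pos_iff_of_pos_left hc]

theorem sqrt_mul_abs_mul_le_of_notMem_Estar {d : ℕ} {p q : ℝ} (hp : 0 ≤ p) (hq : 0 ≤ q)
    (hpq : (p, q) ∉ Estar d) : √d * |p * q| ≤ p ^ 2 + q ^ 2 := by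
  rw [abs_of_nonneg (mul_nonneg hp hq)]
  rcases hp.eq_or_lt with rfl | hp
  · simp only [zero_mul, mul_zero]; positivity
  rcases hq.eq_or_lt with rfl | hq
  · simp only [mul_zero]; positivity
  rcases (Real.sqrt_nonneg d).eq_or_lt with hd | hd
  · rw [← hd, zero_mul]; positivity
  simp only [Estar, Set.mem_ofPred_eq, not_and_or, not_lt] at hpq
  rcases hpq with hpq | hpq | hpq | hpq
  · exact absurd hp hpq.not_gt
  · exact absurd hq hpq.not_gt
  · have : p * √d ≤ q := by
      rw [div_le_iff₀ hq, inv_mul_eq_div, le_div_iff₀ hd] at hpq; linarith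
    nlinarith
  · have : √d * q ≤ p := (le_div_iff₀ hq).mp hpq
    nlinarith

theorem Dplus_nonneg {n h : ℕ} {w : ℝ} (hw : w ∈ Dplus n h) : 0 ≤ w := by
  rcases hw with rfl | ⟨i, -, rfl⟩
  · exact le_rfl
  · positivity

theorem two_pow_mul_mem_Dplus {n h : ℕ} {w : ℝ} (hw : w ∈ Dplus n h) (j : ℕ) :
    2 ^ j * w ∈ Dplus n h := by
  rcases hw with rfl | ⟨i, hi, rfl⟩
  · rw [mul_zero]; exact Set.mem_insert _ _
  · exact Or.inr ⟨j + i, by omega, by rw [pow_add, mul_div_assoc]⟩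

theorem two_pow_sq (j : ℕ) : ((2 : ℝ) ^ j) ^ 2 = 4 ^ j := by
  rw [← pow_mul, mul_comm, pow_mul]; norm_num

theorem le_add_of_two_pow_lt_sqrt_mul {d m i j : ℕ} (hlt : (2 : ℝ) ^ i < √d * 2 ^ j)
    (hdm : d < 4 ^ (m + 1)) : i ≤ j + m := by
  have hsq : (4 : ℝ) ^ i < d * 4 ^ j := by
    have h := pow_lt_pow_left₀ hlt (by positivity) two_ne_zero
    rwa [mul_pow, Real.sq_sqrt d.cast_nonneg, two_pow_sq, two_pow_sq] at h
  have hsq' : 4 ^ i < d * 4 ^ j := by exact_mod_cast hsq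
  by_contra! hij
  have : 4 ^ j * 4 ^ (m + 1) ≤ 4 ^ i := by
    rw [← pow_add]; exact Nat.pow_le_pow_right (by norm_num) (by omega)
  nlinarith [Nat.pow_pos (n := j) (show 0 < 4 by norm_num)]

theorem le_add_of_two_pow_div_mem_Estar {d m i j : ℕ} {s : ℝ} (hs : 0 < s)
    (hE : (2 ^ i / s, 2 ^ j / s) ∈ Estar d) (hdm : d < 4 ^ (m + 1)) :
    i ≤ j + m ∧ j ≤ i + m := by
  obtain ⟨-, -, hlow, hup⟩ := hE
  rw [div_div_div_cancel_right₀ hs.ne'] at hlow hup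
  refine ⟨le_add_of_two_pow_lt_sqrt_mul ?_ hdm, le_add_of_two_pow_lt_sqrt_mul ?_ hdm⟩
  · rwa [div_lt_iff₀ (by positivity)] at hup
  · have hd : 0 < √d := (by positivity : (0 : ℝ) ≤ 2 ^ i / 2 ^ j).trans_lt hup
    rwa [lt_div_iff₀ (by positivity), inv_mul_lt_iff₀ hd] at hlow

theorem two_pow_div_le_mul {d m i j : ℕ} {s : ℝ} (hs : 0 ≤ s) (hij : i < j + 2 * m)
    (hdm : 4 ^ m ≤ 2 * d) : 2 ^ i / s ≤ d * (2 ^ j / s) := by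
  have h : 2 ^ (i + 1) ≤ 2 ^ j * (2 * d) :=
    calc 2 ^ (i + 1) ≤ 2 ^ (j + 2 * m) := Nat.pow_le_pow_right (by norm_num) hij
      _ = 2 ^ j * 4 ^ m := by rw [pow_add, pow_mul]; norm_num
      _ ≤ 2 ^ j * (2 * d) := Nat.mul_le_mul_left _ hdm
  have h' : (2 : ℝ) ^ i ≤ d * 2 ^ j := by
    have : (2 : ℝ) ^ (i + 1) ≤ 2 ^ j * (2 * d) := by exact_mod_cast h
    rw [pow_succ] at this; linarith
  rw [← mul_div_assoc]
  exact div_le_div_of_nonneg_right h' hs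

theorem exists_level_length {d : ℕ} (hd : 2 ≤ d) : ∃ m, 0 < m ∧ 4 ^ m ≤ 2 * d ∧ d < 4 ^ (m + 1) :=
  ⟨Nat.log 4 (2 * d), Nat.log_pos (by norm_num) (by omega), Nat.pow_log_le_self 4 (by omega),
    by have := Nat.lt_pow_succ_log_self (by norm_num : 1 < 4) (2 * d); omega⟩

theorem div_le_div_add_one_of_le_add {i j m : ℕ} (hm : 0 < m) (h : i ≤ j + m) :
    i / m ≤ j / m + 1 :=
  (Nat.div_le_div_right h).trans (Nat.add_div_right j hm).le

theorem lt_add_two_mul_of_div_le_div_add_one {i j m : ℕ} (hm : 0 < m)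
    (h : i / m ≤ j / m + 1) : i < j + 2 * m :=
  calc i < i / m * m + m := Nat.lt_div_mul_add hm
    _ ≤ (j / m + 1) * m + m := by gcongr
    _ = j / m * m + 2 * m := by ring
    _ ≤ j + 2 * m := by gcongr; exact Nat.div_mul_le_self j m

theorem memZ_zero (d h n : ℕ) : memZ d h n 0 :=
  ⟨by simp, fun _ => Set.mem_insert _ _, fun _ _ hv => absurd rfl hv⟩

theorem memZ_two_pow_smul {d h n : ℕ} {y : Fin h × Fin n → ℝ} (hy : memZ d h n y) {j : ℕ}
    (hj : 4 ^ j * ∑ a, y a ^ 2 ≤ 10) : memZ d h n ((2 : ℝ) ^ j • y) := by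
  obtain ⟨-, hyD, hyw⟩ := hy
  refine ⟨?_, fun a => two_pow_mul_mem_Dplus (hyD a) j, fun u v hv => ?_⟩
  · simpa [mul_pow, two_pow_sq, mul_sum] using hj
  · have hyv : y v ≠ 0 := fun h0 => hv (by simp [h0])
    have := mul_le_mul_of_nonneg_left (hyw u v hyv) (by positivity : (0 : ℝ) ≤ 2 ^ j)
    simp only [Pi.smul_apply, smul_eq_mul]
    linarith

theorem memZ_indicator {d h n : ℕ} {y : Fin h × Fin n → ℝ} (hyD : ∀ a, y a ∈ Dplus n h)
    (hy : ∑ a, y a ^ 2 ≤ 10) {T : Set (Fin h × Fin n)}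
    (hT : ∀ u ∈ T, ∀ v ∈ T, y u ≠ 0 → y v ≠ 0 → y u ≤ d * y v) : memZ d h n (T.indicator y) := by
  refine ⟨le_trans (sum_le_sum fun a _ => ?_) hy, fun a => ?_, fun u v hv => ?_⟩
  · by_cases ha : a ∈ T <;> simp [ha, sq_nonneg]
  · by_cases ha : a ∈ T
    · simpa [ha] using hyD a
    · simp [ha, Dplus]
  · have hvT : v ∈ T := by by_contra hvT; simp [hvT] at hv
    rw [Set.indicator_of_mem hvT] at hv ⊢
    by_cases hu : u ∈ T ∧ y u ≠ 0
    · rw [Set.indicator_of_mem hu.1]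
      exact hT u hu.1 v hvT hu.2 hv
    · have : T.indicator y u = 0 := by
        by_cases huT : u ∈ T
        · simpa [huT] using hu
        · simp [huT]
      rw [this]
      exact mul_nonneg d.cast_nonneg (Dplus_nonneg (hyD v))

variable {d h n : ℕ} {A : Matrix (Fin h × Fin n) (Fin h × Fin n) ℝ} {S : ℝ}

/-- Rescaling by the power of two that brings `‖y‖²` into `(5/2, 10]` gives a vector of `Z`. -/
theorem abs_quadFormOn_Estar_le_of_memZ
    (hS : ∀ x, memZ d h n x → |quadFormOn A (Estar d) x| ≤ S) {y : Fin h × Fin n → ℝ}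
    (hy : memZ d h n y) : |quadFormOn A (Estar d) y| ≤ 2 / 5 * (∑ a, y a ^ 2) * S := by
  rcases (sum_nonneg fun a _ => sq_nonneg (y a)).eq_or_lt with h0 | hpos
  · have hy0 : y = 0 := funext fun a =>
      pow_eq_zero_iff two_ne_zero |>.mp <|
        (sum_eq_zero_iff_of_nonneg fun a _ => sq_nonneg (y a)).mp h0.symm a (mem_univ a)
    simp [hy0, quadFormOn]
  obtain ⟨j, hj1, hj2⟩ :=
    exists_nat_pow_near ((one_le_div hpos).mpr hy.1) (by norm_num : (1 : ℝ) < 4)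
  have hscale : quadFormOn A (Estar d) ((2 : ℝ) ^ j • y) = 4 ^ j * quadFormOn A (Estar d) y := by
    rw [quadFormOn_smul A (Estar_mul_iff d (by positivity)), two_pow_sq]
  have hQ := hS _ (memZ_two_pow_smul hy ((le_div_iff₀ hpos).mp hj1))
  rw [hscale, abs_mul, abs_of_pos (by positivity)] at hQ
  have h1 : 1 ≤ 2 / 5 * (∑ a, y a ^ 2) * 4 ^ j := by
    rw [div_lt_iff₀ hpos, pow_succ] at hj2; linarith
  calc |quadFormOn A (Estar d) y|
        ≤ 2 / 5 * (∑ a, y a ^ 2) * 4 ^ j * |quadFormOn A (Estar d) y| :=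
        le_mul_of_one_le_left (abs_nonneg _) h1
    _ = 2 / 5 * (∑ a, y a ^ 2) * (4 ^ j * |quadFormOn A (Estar d) y|) := by ring
    _ ≤ 2 / 5 * (∑ a, y a ^ 2) * S := mul_le_mul_of_nonneg_left hQ (by positivity)

theorem abs_quadFormOn_Estar_le_of_Dplus (hd : 2 ≤ d)
    (hS : ∀ x, memZ d h n x → |quadFormOn A (Estar d) x| ≤ S) {y : Fin h × Fin n → ℝ}
    (hyD : ∀ a, y a ∈ Dplus n h) (hy : ∑ a, y a ^ 2 ≤ 10) :
    |quadFormOn A (Estar d) y| ≤ 6 / 5 * (∑ a, y a ^ 2) * S := by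
  set s := √((n : ℝ) * h)
  have hexp : ∀ a, ∃ i : ℕ, y a ≠ 0 → y a = 2 ^ i / s := fun a => by
    rcases hyD a with h0 | ⟨i, -, hi⟩
    · exact ⟨0, fun h => absurd h0 h⟩
    · exact ⟨i, fun _ => hi⟩
  choose e he using hexp
  have hs : ∀ a, y a ≠ 0 → 0 < s := fun a ha =>
    (Real.sqrt_nonneg _).lt_of_ne fun h0 => ha (by rw [he a ha]; simp [s, ← h0])
  obtain ⟨m, hm, hm4, hdm⟩ := exists_level_length hd
  have hS0 : 0 ≤ S := (abs_nonneg _).trans (hS 0 (memZ_zero d h n))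
  -- level `k` collects the entries `2 ^ i / s` with `m * k ≤ i < m * (k + 1)`
  have hlevels := abs_quadFormOn_le_of_levels A (Estar d) y (fun a => e a / m)
    (C := 2 / 5 * S) (by positivity) (fun a b hab => ?_) (fun k T hT => ?_)
  · linarith
  · have ha := (hab.1).ne'
    have hb := (hab.2.1).ne'
    rw [he a ha, he b hb] at hab
    obtain ⟨h1, h2⟩ := le_add_of_two_pow_div_mem_Estar (hs a ha) hab hdm
    exact ⟨div_le_div_add_one_of_le_add hm h1, div_le_div_add_one_of_le_add hm h2⟩
  · refine (abs_quadFormOn_Estar_le_of_memZ hS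
      (memZ_indicator hyD hy fun u hu v hv hu0 hv0 => ?_)).trans_eq (by ring)
    rw [he u hu0, he v hv0]
    refine two_pow_div_le_mul (hs v hv0).le (lt_add_two_mul_of_div_le_div_add_one hm ?_) hm4
    have h1 := hT hu
    have h2 := hT hv
    simp only [Set.mem_ofPred_eq] at h1 h2
    omega

theorem exists_Dplus_bracket {n h : ℕ} (hnh : 0 < n * h) {t : ℝ} (ht : 0 ≤ t) :
    ∃ lo hi : ℝ, lo ∈ Dplus n h ∧ hi ∈ Dplus n h ∧ lo ≤ t ∧ t ≤ hi ∧
      hi ^ 2 ≤ 4 * t ^ 2 + 4 / (n * h) := by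
  have hnh' : (0 : ℝ) < n * h := by exact_mod_cast hnh
  set s := √((n : ℝ) * h)
  have hs : 0 < s := Real.sqrt_pos.mpr hnh'
  have hs2 : s ^ 2 = n * h := Real.sq_sqrt hnh'.le
  by_cases hsmall : t ≤ 2 / s
  · refine ⟨0, 2 / s, Set.mem_insert _ _, Or.inr ⟨1, le_rfl, by rw [pow_one]⟩, ht, hsmall, ?_⟩
    rw [div_pow, hs2]
    nlinarith
  rw [not_le, div_lt_iff₀ hs] at hsmall
  obtain ⟨k, hk1, hk2⟩ := exists_nat_pow_near (x := t * s) (by linarith) one_lt_two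
  have hk : 1 ≤ k := by
    by_contra! hk0
    obtain rfl : k = 0 := by omega
    norm_num at hk2; linarith
  refine ⟨2 ^ k / s, 2 ^ (k + 1) / s, Or.inr ⟨k, hk, rfl⟩, Or.inr ⟨k + 1, by omega, rfl⟩,
    (div_le_iff₀ hs).mpr hk1, (le_div_iff₀ hs).mpr hk2.le, ?_⟩
  have hhi : 2 ^ (k + 1) / s ≤ 2 * t := by
    rw [div_le_iff₀ hs, pow_succ]; linarith
  nlinarith [div_nonneg (by positivity : (0 : ℝ) ≤ 2 ^ (k + 1)) hs.le,
    div_nonneg (by norm_num : (0 : ℝ) ≤ 4) hnh'.le]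

theorem abs_quadForm_le_of_Dplus (hd : 2 ≤ d) (hrow : ∀ a, ∑ b, |A a b| ≤ 2 * d)
    (hcol : ∀ b, ∑ a, |A a b| ≤ 2 * d)
    (hS : ∀ x, memZ d h n x → |quadFormOn A (Estar d) x| ≤ S) {y : Fin h × Fin n → ℝ}
    (hyD : ∀ a, y a ∈ Dplus n h) (hy : ∑ a, y a ^ 2 ≤ 10) :
    |quadForm A y| ≤ (6 / 5 * S + 4 * √d) * ∑ a, y a ^ 2 := by
  have hE := abs_quadFormOn_Estar_le_of_Dplus hd hS hyD hy
  have hEc : √d * |quadFormOn A (Estar d)ᶜ y| ≤ 2 * (2 * d) * ∑ a, y a ^ 2 :=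
    mul_abs_quadFormOn_le hrow hcol (Real.sqrt_nonneg _) fun a b hab =>
      sqrt_mul_abs_mul_le_of_notMem_Estar (Dplus_nonneg (hyD a)) (Dplus_nonneg (hyD b)) hab
  have hsd : 0 < √d := Real.sqrt_pos.mpr (by exact_mod_cast (by omega : 0 < d))
  have hEc' : |quadFormOn A (Estar d)ᶜ y| ≤ 4 * √d * ∑ a, y a ^ 2 := by
    refine le_of_mul_le_mul_left (hEc.trans_eq ?_) hsd
    linear_combination (-4 * ∑ a, y a ^ 2) * Real.mul_self_sqrt d.cast_nonneg
  calc |quadForm A y| = |quadFormOn A (Estar d) y + quadFormOn A (Estar d)ᶜ y| := by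
        rw [← quadForm_sub_quadFormOn, add_sub_cancel]
    _ ≤ |quadFormOn A (Estar d) y| + |quadFormOn A (Estar d)ᶜ y| := abs_add_le _ _
    _ ≤ (6 / 5 * S + 4 * √d) * ∑ a, y a ^ 2 := by linarith

theorem abs_quadForm_le_of_nonneg (hd : 2 ≤ d) (hnh : 0 < n * h) (hdiag : ∀ a, A a a = 0)
    (hrow : ∀ a, ∑ b, |A a b| ≤ 2 * d) (hcol : ∀ b, ∑ a, |A a b| ≤ 2 * d)
    (hS : ∀ x, memZ d h n x → |quadFormOn A (Estar d) x| ≤ S) {w : Fin h × Fin n → ℝ}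
    (hw : 0 ≤ w) (hw1 : ∑ a, w a ^ 2 ≤ 1) : |quadForm A w| ≤ 48 / 5 * S + 32 * √d := by
  choose lo hi hlo hhi hlow hwhi hhi2 using fun a => exists_Dplus_bracket hnh (hw a)
  have hS0 : 0 ≤ S := (abs_nonneg _).trans (hS 0 (memZ_zero d h n))
  have hvertex : ∀ y, (∀ a, y a = lo a ∨ y a = hi a) →
      |quadForm A y| ≤ 48 / 5 * S + 32 * √d := by
    intro y hy
    have hyD : ∀ a, y a ∈ Dplus n h := fun a => (hy a).elim (· ▸ hlo a) (· ▸ hhi a)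
    have hy8 : ∑ a, y a ^ 2 ≤ 8 :=
      calc ∑ a, y a ^ 2 ≤ ∑ a : Fin h × Fin n, (4 * w a ^ 2 + 4 / (n * h)) :=
            sum_le_sum fun a _ => le_trans (pow_le_pow_left₀ (Dplus_nonneg (hyD a))
              ((hy a).elim (fun h => h ▸ (hlow a).trans (hwhi a)) (·.le)) 2) (hhi2 a)
        _ = 4 * ∑ a, w a ^ 2 + 4 := by
            rw [sum_add_distrib, ← mul_sum, sum_const, card_univ, Fintype.card_prod,
              Fintype.card_fin, Fintype.card_fin, nsmul_eq_mul, Nat.cast_mul, mul_comm (h : ℝ),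
              mul_div_cancel₀ _ (by exact_mod_cast hnh.ne' : (n : ℝ) * h ≠ 0)]
        _ ≤ 8 := by linarith
    have := abs_quadForm_le_of_Dplus hd hrow hcol hS hyD (by linarith)
    have hc : 0 ≤ 6 / 5 * S + 4 * √d := by positivity
    nlinarith
  obtain ⟨yU, hyU, hU⟩ := exists_vertex_le_of_affine_update (quadForm A)
    (exists_quadForm_update_eq_add_mul A hdiag) hlow hwhi
  obtain ⟨yL, hyL, hL⟩ := exists_vertex_le_of_affine_update (quadForm (-A))
    (exists_quadForm_update_eq_add_mul (-A) (by simp [hdiag])) hlow hwhi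
  rw [quadForm_neg_left, quadForm_neg_left, neg_le_neg_iff] at hL
  have hU' := hvertex yU hyU
  have hL' := hvertex yL hyL
  rw [abs_le] at hU' hL' ⊢
  constructor <;> linarith

end Dyadic

section Lift

variable {d h n : ℕ} (H : SimpleGraph (Fin h))

theorem Nmat_self (G : SimpleGraph (Fin h × Fin n)) (a : Fin h × Fin n) : Nmat H G a a = 0 := by
  simp [Nmat, adjMat, Mbar]

theorem Nmat_comm (G : SimpleGraph (Fin h × Fin n)) (a b : Fin h × Fin n) :
    Nmat H G a b = Nmat H G b a := by
  simp only [Nmat, adjMat, Mbar, Matrix.sub_apply, G.adj_comm, H.adj_comm]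

theorem sum_Mbar_fibre (i : Fin h) (j : Fin n) (i' : Fin h) :
    ∑ j', Mbar h n H (i, j) (i', j') = if H.Adj i i' then 1 else 0 := by
  have hn : (n : ℝ) ≠ 0 := by exact_mod_cast (Fin.pos j).ne'
  split_ifs with hadj <;> simp [Mbar, hadj, hn]

theorem sum_adjMat_liftGraph_fibre_le (ω : LiftSpace h n) (i : Fin h) (j : Fin n) (i' : Fin h) :
    ∑ j', adjMat (liftGraph H ω) (i, j) (i', j') ≤ ∑ j', Mbar h n H (i, j) (i', j') := by
  rw [sum_Mbar_fibre]
  split_ifs with hadj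
  · have hcard : (univ.filter fun j' => (liftGraph H ω).Adj (i, j) (i', j')).card ≤ 1 := by
      refine card_le_one.mpr fun j₁ hj₁ j₂ hj₂ => ?_
      obtain ⟨-, -, hj₁⟩ := Finset.mem_filter.mp hj₁
      obtain ⟨-, -, hj₂⟩ := Finset.mem_filter.mp hj₂
      rcases hj₁ with ⟨hlt, h₁⟩ | ⟨hlt, h₁⟩ <;> rcases hj₂ with ⟨hlt', h₂⟩ | ⟨hlt', h₂⟩
      · exact h₁.trans h₂.symm
      · exact absurd hlt (lt_asymm hlt')
      · exact absurd hlt' (lt_asymm hlt)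
      · exact (ω i' i).injective (h₁.symm.trans h₂)
    simpa [adjMat, sum_boole] using hcard
  · refine (sum_eq_zero fun j' _ => ?_).le
    simp only [adjMat, liftGraph]
    exact if_neg fun hA => hadj hA.1

theorem sum_Mbar_row [DecidableRel H.Adj] (hreg : H.IsRegularOfDegree d) (a : Fin h × Fin n) :
    ∑ b, Mbar h n H a b = d := by
  rw [Fintype.sum_prod_type]
  simp only [sum_Mbar_fibre]
  rw [← hreg a.1, ← SimpleGraph.card_neighborFinset_eq_degree,
    SimpleGraph.neighborFinset_eq_filter]
  rw [natCast_card_filter]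
  congr!

theorem sum_abs_Nmat_liftGraph_le [DecidableRel H.Adj] (hreg : H.IsRegularOfDegree d)
    (ω : LiftSpace h n) (a : Fin h × Fin n) : ∑ b, |Nmat H (liftGraph H ω) a b| ≤ 2 * d := by
  have hentry : ∀ b, |Nmat H (liftGraph H ω) a b|
      ≤ adjMat (liftGraph H ω) a b + Mbar h n H a b := fun b => by
    refine (abs_sub _ _).trans_eq ?_
    rw [abs_of_nonneg (by unfold adjMat; split_ifs <;> norm_num),
      abs_of_nonneg (by unfold Mbar; split_ifs <;> positivity)]
  have hadj : ∑ b, adjMat (liftGraph H ω) a b ≤ ∑ b, Mbar h n H a b := by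
    rw [Fintype.sum_prod_type, Fintype.sum_prod_type]
    exact sum_le_sum fun i' _ => sum_adjMat_liftGraph_fibre_le H ω a.1 a.2 i'
  calc ∑ b, |Nmat H (liftGraph H ω) a b|
      ≤ ∑ b, adjMat (liftGraph H ω) a b + ∑ b, Mbar h n H a b := by
        rw [← sum_add_distrib]; exact sum_le_sum fun b _ => hentry b
    _ ≤ 2 * d := by rw [sum_Mbar_row H hreg] at hadj ⊢; linarith

theorem Mbar_mulVec_eq_zero {x : Fin h × Fin n → ℝ} (hx : ∀ i, ∑ j, x (i, j) = 0) :
    Mbar h n H *ᵥ x = 0 := by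
  ext a
  simp only [mulVec, dotProduct, Fintype.sum_prod_type, Mbar, ite_mul, zero_mul]
  simp [← mul_sum, hx]

theorem quadForm_Nmat_eq_of_balanced_eigen {G : SimpleGraph (Fin h × Fin n)} {μ : ℝ}
    {x : Fin h × Fin n → ℝ} (heig : adjMat G *ᵥ x = μ • x) (hx : ∀ i, ∑ j, x (i, j) = 0) :
    quadForm (Nmat H G) x = μ * ∑ a, x a ^ 2 := by
  rw [Nmat, quadForm_sub_left, quadForm_eq_dotProduct, quadForm_eq_dotProduct, heig,
    Mbar_mulVec_eq_zero H hx, dotProduct_zero, sub_zero, dotProduct_smul, smul_eq_mul]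
  simp [dotProduct, sq]

end Lift

theorem statement7_general (d h n : ℕ) (hd : 2 ≤ d) (H : SimpleGraph (Fin h))
    [DecidableRel H.Adj] (hreg : H.IsRegularOfDegree d) (ω : LiftSpace h n) :
    lambdaStar (liftGraph H ω) ≤
      96 * sSup {r : ℝ | ∃ x : Fin h × Fin n → ℝ, memZ d h n x ∧
          r = |quadFormOn (Nmat H (liftGraph H ω)) (Estar d) x|} +
        480 * Real.sqrt d := by
  set N := Nmat H (liftGraph H ω)
  set Zvalues := {r : ℝ | ∃ x : Fin h × Fin n → ℝ, memZ d h n x ∧ r = |quadFormOn N (Estar d) x|}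
  have hrow : ∀ a, ∑ b, |N a b| ≤ 2 * d := sum_abs_Nmat_liftGraph_le H hreg ω
  have hcol : ∀ b, ∑ a, |N a b| ≤ 2 * d := fun b => by simpa only [N, Nmat_comm] using hrow b
  have hbdd : BddAbove Zvalues := ⟨2 * d * 10, by
    rintro r ⟨x, hx, rfl⟩
    nlinarith [abs_quadFormOn_le hrow hcol (Estar d) x, hx.1]⟩
  have hS : ∀ x, memZ d h n x → |quadFormOn N (Estar d) x| ≤ sSup Zvalues :=
    fun x hx => le_csSup hbdd ⟨x, hx, rfl⟩
  have hS0 : 0 ≤ sSup Zvalues := (abs_nonneg _).trans (hS 0 (memZ_zero d h n))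
  refine Real.sSup_le ?_ (by positivity)
  rintro r ⟨μ, x, hx0, heig, hbal, rfl⟩
  obtain ⟨a, -⟩ := Function.ne_iff.mp hx0
  obtain ⟨z, hz1, hz⟩ := exists_sum_sq_eq_one_quadForm_eq hx0
    (quadForm_Nmat_eq_of_balanced_eigen H heig hbal)
  have hnonneg : ∀ w : Fin h × Fin n → ℝ, 0 ≤ w → ∑ a, w a ^ 2 ≤ 1 →
      |quadForm N w| ≤ 48 / 5 * sSup Zvalues + 32 * √d := fun w hw hw1 =>
    abs_quadForm_le_of_nonneg hd (Nat.mul_pos (Fin.pos a.2) (Fin.pos a.1)) (Nmat_self H _)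
      hrow hcol hS hw hw1
  have := hz ▸ abs_quadForm_le_five_mul N hnonneg hz1.le
  linarith [Real.sqrt_nonneg d]

theorem statement7 (d h n : ℕ) (hd : 2 ≤ d) (hn : 1 ≤ n) (H : SimpleGraph (Fin h))
    [DecidableRel H.Adj] (hreg : H.IsRegularOfDegree d) (ω : LiftSpace h n) :
    lambdaStar (liftGraph H ω) ≤
      96 * sSup {r : ℝ | ∃ x : Fin h × Fin n → ℝ, memZ d h n x ∧
          r = |quadFormOn (Nmat H (liftGraph H ω)) (Estar d) x|} +
        480 * Real.sqrt d :=
  statement7_general d h n hd H hreg ω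

end RandomLifts
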